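/- In ℝ³, the intersection over all triples (α, β, γ) of strictly positive real numbers of the cones pos({(1,1,1), (β, β, −α−γ), (α, −β−γ, α)}) equals pos({(1,1,1), (1,0,1), (1,1,0), (1,0,0)}), and this cone equals {(x, y, z) ∈ ℝ³ : y ≥ 0, z ≥ 0, x ≥ y, x ≥ z}. -/

import Mathlib

/-!
A point of the cone `y, z ≥ 0, y, z ≤ x` is the nonnegative combination
`((γx + βz + αy) F + (x - z) (β, β, -α-γ) + (x - y) (α, -β-γ, α)) / (α + β + γ)`,
so it lies in every `𝓕_{Δ,w}`. Conversely, `(1, t, 1)` and `(1, 1, t)` are nonnegative on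
the generators of `𝓕_{Δ,w}` for `w = (t, 1, 1)` and `w = (1, t, 1)` respectively; letting
`t → ∞` forces `y, z ≥ 0` on the intersection, and `w = (1, 1, 1)` gives `y, z ≤ x`.
-/

/-- The positive hull of a subset `S` of a real vector space: all finite nonnegative
linear combinations of elements of `S`. -/
def posHull {E : Type*} [AddCommGroup E] [Module ℝ E] (S : Set E) : Set E :=
  {x | ∃ (t : Finset E) (c : E → ℝ),
    ↑t ⊆ S ∧ (∀ y ∈ t, 0 ≤ c y) ∧ x = ∑ y ∈ t, c y • y}

open PointedCone

section posHull

variable {E : Type*} [AddCommGroup E] [Module ℝ E] {S : Set E}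

theorem posHull_eq_hull (S : Set E) : posHull S = PointedCone.hull ℝ S := by
  ext x
  constructor
  · rintro ⟨t, c, htS, hc, rfl⟩
    exact Submodule.sum_mem _ fun y hy =>
      Submodule.smul_mem _ ⟨c y, hc y hy⟩ (subset_hull (htS hy))
  · intro hx
    obtain ⟨c, hcS, hc, rfl⟩ := mem_hull_set.mp hx
    exact ⟨c.support, c, hcS, fun y _ => hc y, rfl⟩

theorem posHull_subset_iff {K : PointedCone ℝ E} : posHull S ⊆ K ↔ S ⊆ K := by
  rw [posHull_eq_hull]
  exact Submodule.span_le

theorem smul_mem_posHull {a : ℝ} (ha : 0 ≤ a) {y : E} (hy : y ∈ S) : a • y ∈ posHull S := by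
  rw [posHull_eq_hull]
  exact Submodule.smul_mem _ ⟨a, ha⟩ (subset_hull hy)

theorem add_mem_posHull {x y : E} (hx : x ∈ posHull S) (hy : y ∈ posHull S) :
    x + y ∈ posHull S := by
  rw [posHull_eq_hull] at *
  exact add_mem hx hy

theorem smul_add_smul_add_smul_mem_posHull {a b c : ℝ} (ha : 0 ≤ a) (hb : 0 ≤ b) (hc : 0 ≤ c)
    {u v w : E} (hu : u ∈ S) (hv : v ∈ S) (hw : w ∈ S) : a • u + b • v + c • w ∈ posHull S :=
  add_mem_posHull (add_mem_posHull (smul_mem_posHull ha hu) (smul_mem_posHull hb hv))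
    (smul_mem_posHull hc hw)

theorem nonneg_of_mem_posHull (f : E →ₗ[ℝ] ℝ) (hf : ∀ y ∈ S, 0 ≤ f y) {x : E}
    (hx : x ∈ posHull S) : 0 ≤ f x :=
  posHull_subset_iff (K := (positive ℝ ℝ).comap f) |>.mpr hf hx

end posHull

theorem nonneg_of_forall_pos_add_mul_nonneg {K : Type*} [Field K] [LinearOrder K]
    [IsStrictOrderedRing K] {a b : K} (h : ∀ t > 0, 0 ≤ a + t * b) : 0 ≤ b := by
  by_contra! hb
  have := h ((|a| + 1) / -b) (div_pos (by positivity) (neg_pos.mpr hb))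
  have ht : (|a| + 1) / -b * b = -(|a| + 1) := by
    rw [div_neg, neg_mul, div_mul_cancel₀ _ hb.ne]
  linarith [le_abs_self a]

/-- The cone `𝓕_{Δ,w}` for the weight `w = (α, β, γ)`. -/
def weightCone (α β γ : ℝ) : Set (Fin 3 → ℝ) :=
  posHull {![1, 1, 1], ![β, β, -α - γ], ![α, -β - γ, α]}

/-- The union `𝓑 ∪ 𝓒` of the two chambers, as the dual of its four facet normals. -/
def cornerCone : PointedCone ℝ (Fin 3 → ℝ) :=
  dual (dotProductBilin ℝ ℝ) {![(0 : ℝ), 1, 0], ![0, 0, 1], ![1, -1, 0], ![1, 0, -1]}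

theorem coe_cornerCone :
    (cornerCone : Set (Fin 3 → ℝ)) = {x | 0 ≤ x 1 ∧ 0 ≤ x 2 ∧ x 1 ≤ x 0 ∧ x 2 ≤ x 0} := by
  ext x
  simp [cornerCone, dotProduct, Fin.sum_univ_three]

theorem posHull_generators_eq_cornerCone :
    posHull {![(1 : ℝ), 1, 1], ![1, 0, 1], ![1, 1, 0], ![1, 0, 0]} = cornerCone := by
  refine Set.Subset.antisymm (posHull_subset_iff.mpr ?_) fun x hx => ?_
  · rintro y (rfl | rfl | rfl | rfl) <;> simp [coe_cornerCone]
  rw [coe_cornerCone] at hx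
  obtain ⟨h1, h2, h10, h20⟩ := hx
  rcases le_total (x 1) (x 2) with h12 | h21
  · have hx : x = x 1 • ![1, 1, 1] + (x 2 - x 1) • ![1, 0, 1] + (x 0 - x 2) • ![1, 0, 0] := by
      ext i; fin_cases i <;> simp
    rw [hx]
    exact smul_add_smul_add_smul_mem_posHull h1 (sub_nonneg.mpr h12) (sub_nonneg.mpr h20)
      (by simp) (by simp) (by simp)
  · have hx : x = x 2 • ![1, 1, 1] + (x 1 - x 2) • ![1, 1, 0] + (x 0 - x 1) • ![1, 0, 0] := by
      ext i; fin_cases i <;> simp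
    rw [hx]
    exact smul_add_smul_add_smul_mem_posHull h2 (sub_nonneg.mpr h21) (sub_nonneg.mpr h10)
      (by simp) (by simp) (by simp)

theorem cornerCone_subset_weightCone {α β γ : ℝ} (hα : 0 < α) (hβ : 0 < β) (hγ : 0 < γ) :
    (cornerCone : Set (Fin 3 → ℝ)) ⊆ weightCone α β γ := by
  rw [coe_cornerCone]
  rintro x ⟨h1, h2, h10, h20⟩
  have hs : 0 < α + β + γ := by positivity
  have hx : x = ((γ * x 0 + β * x 2 + α * x 1) / (α + β + γ)) • ![1, 1, 1]
      + ((x 0 - x 2) / (α + β + γ)) • ![β, β, -α - γ]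
      + ((x 0 - x 1) / (α + β + γ)) • ![α, -β - γ, α] := by
    ext i; fin_cases i <;>
    · simp only [Fin.zero_eta, Fin.mk_one, Fin.reduceFinMk, Fin.isValue, Pi.add_apply,
        Matrix.smul_cons, smul_eq_mul, Matrix.smul_empty, Matrix.add_cons, Matrix.head_cons,
        Matrix.tail_cons, Matrix.empty_add_empty, Matrix.cons_val_zero, Matrix.cons_val_one,
        Matrix.cons_val]
      field_simp
      ring
  rw [hx]
  refine smul_add_smul_add_smul_mem_posHull ?_ ?_ ?_ (by simp) (by simp) (by simp)
  all_goals apply div_nonneg _ hs.le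
  · have : 0 ≤ x 0 := h1.trans h10
    positivity
  · exact sub_nonneg.mpr h20
  · exact sub_nonneg.mpr h10

/-- The hypotheses say that `(p, q, r)` is nonnegative on the three generators. -/
theorem nonneg_of_mem_weightCone {α β γ p q r : ℝ} {x : Fin 3 → ℝ}
    (hx : x ∈ weightCone α β γ) (h₁ : 0 ≤ p + q + r) (h₂ : (α + γ) * r ≤ β * (p + q))
    (h₃ : (β + γ) * q ≤ α * (p + r)) : 0 ≤ p * x 0 + q * x 1 + r * x 2 := by
  have := nonneg_of_mem_posHull (dotProductBilin ℝ ℝ ![p, q, r]) ?_ hx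
  · simpa [dotProduct, Fin.sum_univ_three] using this
  rintro y (rfl | rfl | rfl) <;>
    simp only [dotProductBilin_apply_apply, dotProduct, Fin.sum_univ_three, Matrix.cons_val_zero,
      Matrix.cons_val_one, Matrix.cons_val] <;>
    linarith

theorem mem_cornerCone_of_forall_mem_weightCone {x : Fin 3 → ℝ}
    (hx : ∀ α β γ : ℝ, 0 < α → 0 < β → 0 < γ → x ∈ weightCone α β γ) : x ∈ cornerCone := by
  have hx₁ := hx 1 1 1 one_pos one_pos one_pos
  have h10 : 0 ≤ x 0 - x 1 := by
    have := nonneg_of_mem_weightCone (p := 1) (q := -1) (r := 0) hx₁ ?_ ?_ ?_ <;> linarith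
  have h20 : 0 ≤ x 0 - x 2 := by
    have := nonneg_of_mem_weightCone (p := 1) (q := 0) (r := -1) hx₁ ?_ ?_ ?_ <;> linarith
  have h1 : 0 ≤ x 1 := nonneg_of_forall_pos_add_mul_nonneg (a := x 0 + x 2) fun t ht => by
    have := nonneg_of_mem_weightCone (p := 1) (q := t) (r := 1) (hx t 1 1 ht one_pos one_pos)
      ?_ ?_ ?_ <;> linarith
  have h2 : 0 ≤ x 2 := nonneg_of_forall_pos_add_mul_nonneg (a := x 0 + x 1) fun t ht => by
    have := nonneg_of_mem_weightCone (p := 1) (q := 1) (r := t) (hx 1 t 1 one_pos ht one_pos)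
      ?_ ?_ ?_ <;> linarith
  rw [← SetLike.mem_coe, coe_cornerCone]
  exact ⟨h1, h2, sub_nonneg.mp h10, sub_nonneg.mp h20⟩

/-- The computation of `𝓕_Δ = ⋂_w 𝓕_{Δ,w}` in Example 4.4: in ℝ³, the intersection
over all `α, β, γ > 0` of the cones `pos({(1,1,1), (β,β,−α−γ), (α,−β−γ,α)})` equals
`pos({(1,1,1), (1,0,1), (1,1,0), (1,0,0)})`, which is
`{(x,y,z) : y ≥ 0, z ≥ 0, x ≥ y, x ≥ z}`. -/
theorem F_Delta_blowup_P4 :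
    (⋂ (α : ℝ) (β : ℝ) (γ : ℝ) (_ : 0 < α) (_ : 0 < β) (_ : 0 < γ),
      posHull {![(1 : ℝ), 1, 1], ![β, β, -α - γ], ![α, -β - γ, α]})
    = posHull {![(1 : ℝ), 1, 1], ![1, 0, 1], ![1, 1, 0], ![1, 0, 0]} ∧
    posHull {![(1 : ℝ), 1, 1], ![1, 0, 1], ![1, 1, 0], ![1, 0, 0]}
    = {x : Fin 3 → ℝ | 0 ≤ x 1 ∧ 0 ≤ x 2 ∧ x 1 ≤ x 0 ∧ x 2 ≤ x 0} := by
  rw [posHull_generators_eq_cornerCone]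
  refine ⟨?_, coe_cornerCone⟩
  ext x
  simp only [Set.mem_iInter]
  exact ⟨mem_cornerCone_of_forall_mem_weightCone,
    fun hx α β γ hα hβ hγ => cornerCone_subset_weightCone hα hβ hγ hx⟩
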